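/- arXiv:2112.05065 — 2 statements merged into one kernel-verified Lean document; each statement's English description precedes it below -/
import Mathlib

section
/- Let U ⊆ Sym(Ω). There exists a perfect refiner for U (with respect to O) if and only if U = Iso(S,T) for some S, T ∈ Stacks(O). In particular, there exists a perfect refiner for a subgroup G of Sym(Ω) if and only if G = Auto(S) for some S ∈ Stacks(O). -/
/-!
Evaluating the perfection condition at the empty stacks gives `U = Iso(f_L [], f_R [])`.
Conversely, the constant functions `S₀`, `T₀` form a perfect refiner for `Iso(S₀, T₀)`,
because for stacks of equal length `Iso(S ‖ S₀, T ‖ T₀) = Iso(S, T) ∩ Iso(S₀, T₀)`.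
For a subgroup, `1 ∈ Iso(S, T)` forces `S = T`.
-/

/-- A right action of a group `G` on a type `O`, written exponentially in the paper:
`act o g` is `o ^ g`. -/
structure RAct (G : Type*) [Group G] (O : Type*) where
  act : O → G → O
  act_one : ∀ o : O, act o 1 = o
  act_mul : ∀ (o : O) (g h : G), act o (g * h) = act (act o g) h

namespace RAct

variable {G : Type*} [Group G] {O : Type*}

/-- The induced entrywise right action on stacks (finite lists) with entries in `O`. -/
def stack (a : RAct G O) : RAct G (List O) where
  act S g := S.map fun o => a.act o g
  act_one S := by
    have h : (fun o => a.act o 1) = id := funext fun o => a.act_one o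
    simp [h]
  act_mul S g h := by
    rw [List.map_map]
    refine List.map_congr_left fun o _ => ?_
    exact a.act_mul o g h

/-- The transporter set `Iso(x, y) = {g : x ^ g = y}`. -/
def iso {X : Type*} (b : RAct G X) (x y : X) : Set G := {g | b.act x g = y}

/-- A refiner for `U`: a pair of functions on stacks with
`U ∩ Iso(S, T) ⊆ Iso(f_L S, f_R T)` for all stacks `S`, `T`. -/
def IsRefiner (a : RAct G O) (U : Set G) (fL fR : List O → List O) : Prop :=
  ∀ S T : List O, U ∩ a.stack.iso S T ⊆ a.stack.iso (fL S) (fR T)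

/-- A perfect refiner for `U`: a refiner such that
`U ∩ Iso(S, T) = Iso(S ‖ f_L S, T ‖ f_R T)` whenever `|S| = |T|`. -/
def IsPerfectRefiner (a : RAct G O) (U : Set G) (fL fR : List O → List O) : Prop :=
  IsRefiner a U fL fR ∧
    ∀ S T : List O, S.length = T.length →
      U ∩ a.stack.iso S T = a.stack.iso (S ++ fL S) (T ++ fR T)

/-- The action of `x ∈ G` on functions on stacks: `f ^ x (S) = (f (S ^ x⁻¹)) ^ x`. -/
def conj (a : RAct G O) (f : List O → List O) (x : G) : List O → List O :=
  fun S => a.stack.act (f (a.stack.act S x⁻¹)) x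

/-- The combination `f ‖ g` of two functions on stacks: `(f ‖ g)(S) = f S ‖ g S`. -/
def comb (f g : List O → List O) : List O → List O := fun S => f S ++ g S

end RAct

namespace RAct

variable {G : Type*} [Group G] {O : Type*} (a : RAct G O)

@[simp]
theorem stack_act (S : List O) (g : G) : a.stack.act S g = S.map fun o => a.act o g := rfl

theorem stack_iso_nil : a.stack.iso ([] : List O) [] = Set.univ := by
  ext g
  simp [iso]

theorem stack_iso_append {S T : List O} (hST : S.length = T.length) (S' T' : List O) :
    a.stack.iso (S ++ S') (T ++ T') = a.stack.iso S T ∩ a.stack.iso S' T' := by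
  ext g
  have hlen : (a.stack.act S g).length = T.length := by simp [hST]
  simp only [iso, Set.mem_ofPred_eq, Set.mem_inter_iff, stack_act, List.map_append]
  exact ⟨fun h => List.append_inj h hlen, fun ⟨h, h'⟩ => h ▸ h' ▸ rfl⟩

theorem isPerfectRefiner_const (S₀ T₀ : List O) :
    a.IsPerfectRefiner (a.stack.iso S₀ T₀) (fun _ => S₀) (fun _ => T₀) :=
  ⟨fun _ _ _ hg => hg.1, fun _ _ hST => by rw [stack_iso_append a hST, Set.inter_comm]⟩

theorem eq_stack_iso_of_isPerfectRefiner {U : Set G} {fL fR : List O → List O}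
    (h : a.IsPerfectRefiner U fL fR) : U = a.stack.iso (fL []) (fR []) := by
  simpa [stack_iso_nil] using h.2 [] [] rfl

theorem exists_isPerfectRefiner_iff (U : Set G) :
    (∃ fL fR : List O → List O, a.IsPerfectRefiner U fL fR) ↔
      ∃ S T : List O, U = a.stack.iso S T := by
  constructor
  · rintro ⟨fL, fR, h⟩
    exact ⟨fL [], fR [], a.eq_stack_iso_of_isPerfectRefiner h⟩
  · rintro ⟨S, T, rfl⟩
    exact ⟨_, _, a.isPerfectRefiner_const S T⟩

theorem eq_of_one_mem_iso {X : Type*} (b : RAct G X) {x y : X} (h : (1 : G) ∈ b.iso x y) :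
    x = y :=
  (b.act_one x).symm.trans h

theorem exists_subgroup_eq_iso_iff (H : Subgroup G) :
    (∃ S T : List O, (H : Set G) = a.stack.iso S T) ↔
      ∃ S : List O, (H : Set G) = a.stack.iso S S := by
  constructor
  · rintro ⟨S, T, h⟩
    obtain rfl : S = T := a.stack.eq_of_one_mem_iso (h ▸ H.one_mem)
    exact ⟨S, h⟩
  · rintro ⟨S, h⟩
    exact ⟨S, S, h⟩

end RAct

theorem stmt7_general {Ω : Type*} {O : Type*}
    (a : RAct (Equiv.Perm Ω) O) :
    (∀ U : Set (Equiv.Perm Ω),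
      (∃ fL fR : List O → List O, a.IsPerfectRefiner U fL fR) ↔
        ∃ S T : List O, U = a.stack.iso S T) ∧
    (∀ G : Subgroup (Equiv.Perm Ω),
      (∃ fL fR : List O → List O, a.IsPerfectRefiner (G : Set (Equiv.Perm Ω)) fL fR) ↔
        ∃ S : List O, (G : Set (Equiv.Perm Ω)) = a.stack.iso S S) :=
  ⟨a.exists_isPerfectRefiner_iff, fun G =>
    (a.exists_isPerfectRefiner_iff G).trans (a.exists_subgroup_eq_iso_iff G)⟩

/-- There exists a perfect refiner for `U ⊆ Sym Ω` if and only if `U = Iso(S, T)` for some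
stacks `S, T`; in particular, a subgroup `G ≤ Sym Ω` has a perfect refiner if and only if
`G = Auto(S)` for some stack `S`. -/
theorem stmt7 {Ω : Type*} [Fintype Ω] [Nonempty Ω] {O : Type*}
    (a : RAct (Equiv.Perm Ω) O) :
    (∀ U : Set (Equiv.Perm Ω),
      (∃ fL fR : List O → List O, a.IsPerfectRefiner U fL fR) ↔
        ∃ S T : List O, U = a.stack.iso S T) ∧
    (∀ G : Subgroup (Equiv.Perm Ω),
      (∃ fL fR : List O → List O, a.IsPerfectRefiner (G : Set (Equiv.Perm Ω)) fL fR) ↔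
        ∃ S : List O, (G : Set (Equiv.Perm Ω)) = a.stack.iso S S) :=
  stmt7_general a
end

section
/- If there exists a perfect refiner (with respect to O) for a subset U ⊆ Sym(Ω), then either U is empty, or U is a subgroup of Sym(Ω), or U is a right coset of a subgroup of Sym(Ω). -/
/-! Taking `S = T = []` in the definition of a perfect refiner shows that `U` is the transporter
set `Iso(f_L [], f_R [])`, and a nonempty transporter set `Iso(x, y)` is the right coset
`Auto(x) g` of the stabiliser of `x`, for any `g` in it. -/

namespace RAct

variable {G : Type*} [Group G] {X : Type*}

def stabilizer (b : RAct G X) (x : X) : Subgroup G where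
  carrier := b.iso x x
  one_mem' := b.act_one x
  mul_mem' {g h} hg hh := by
    change b.act x (g * h) = x
    rw [b.act_mul, hg, hh]
  inv_mem' {g} hg := by
    change b.act x g⁻¹ = x
    conv_lhs => rw [← hg]
    rw [← b.act_mul, mul_inv_cancel, b.act_one]

theorem iso_eq_stabilizer_mul {b : RAct G X} {x y : X} {g₀ : G} (hg₀ : g₀ ∈ b.iso x y) :
    b.iso x y = {u | ∃ g ∈ b.stabilizer x, u = g * g₀} := by
  ext u
  constructor
  · intro hu
    refine ⟨u * g₀⁻¹, ?_, by group⟩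
    change b.act x (u * g₀⁻¹) = x
    rw [b.act_mul, show b.act x u = b.act x g₀ from hu.trans hg₀.symm, ← b.act_mul,
      mul_inv_cancel, b.act_one]
  · rintro ⟨g, hg, rfl⟩
    change b.act x (g * g₀) = y
    rw [b.act_mul, show b.act x g = x from hg, hg₀]

variable {O : Type*}

theorem IsPerfectRefiner.eq_iso_nil {a : RAct G O} {U : Set G} {fL fR : List O → List O}
    (h : a.IsPerfectRefiner U fL fR) : U = a.stack.iso (fL []) (fR []) := by
  have hnil : a.stack.iso ([] : List O) [] = Set.univ := by
    ext g
    simp [iso, stack]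
  simpa [hnil] using h.2 [] [] rfl

end RAct

theorem stmt8_general {Ω : Type*} {O : Type*}
    (a : RAct (Equiv.Perm Ω) O) (U : Set (Equiv.Perm Ω))
    (h : ∃ fL fR : List O → List O, a.IsPerfectRefiner U fL fR) :
    U = ∅ ∨ (∃ H : Subgroup (Equiv.Perm Ω), U = (H : Set (Equiv.Perm Ω))) ∨
      ∃ (H : Subgroup (Equiv.Perm Ω)) (x : Equiv.Perm Ω),
        U = {u : Equiv.Perm Ω | ∃ g ∈ H, u = g * x} := by
  obtain ⟨fL, fR, hperf⟩ := h
  rcases U.eq_empty_or_nonempty with hU | ⟨g₀, hg₀⟩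
  · exact Or.inl hU
  rw [hperf.eq_iso_nil] at hg₀ ⊢
  exact Or.inr <| Or.inr ⟨_, g₀, RAct.iso_eq_stabilizer_mul hg₀⟩

/-- If `U ⊆ Sym Ω` has a perfect refiner, then `U` is empty, or a subgroup of `Sym Ω`,
or a right coset of a subgroup of `Sym Ω`. -/
theorem stmt8 {Ω : Type*} [Fintype Ω] [Nonempty Ω] {O : Type*}
    (a : RAct (Equiv.Perm Ω) O) (U : Set (Equiv.Perm Ω))
    (h : ∃ fL fR : List O → List O, a.IsPerfectRefiner U fL fR) :
    U = ∅ ∨ (∃ H : Subgroup (Equiv.Perm Ω), U = (H : Set (Equiv.Perm Ω))) ∨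
      ∃ (H : Subgroup (Equiv.Perm Ω)) (x : Equiv.Perm Ω),
        U = {u : Equiv.Perm Ω | ∃ g ∈ H, u = g * x} :=
  stmt8_general a U h
end
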